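/- arXiv:2302.04027 — 4 statements merged into one kernel-verified Lean document; each statement's English description precedes it below -/
import Mathlib

section
/- Let a < b be positive integers with gcd(a,b) = 1 and b ≥ a + 3. Consider the affine semigroup S = ⟨(0, a+2b), (a, 2b), (b, a+b), (a+b, b), (a+2b, 0)⟩ ⊆ ℕ². Then the vector v = (a(b-1), 2b² - a - 4b) satisfies: v + (0, a+2b) ∈ S, v + (a+2b, 0) ∈ S, but v ∉ S. -/
/-!
Both sums are explicit non-negative combinations of generators:
`v + (0, a+2b) = (b-1)(a, 2b)` and `v + (a+2b, 0) = (b-a-3)(0, a+2b) + (a+2)(b, a+b)`.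
For `v ∉ S`, grade `S` by `x ↦ (x₁ + x₂)/(a+2b)`: each generator has degree one and its first
coordinate is `pa + qb` with `p ≤ 1`, so an element of degree `n` has first coordinate `pa + qb`
with `p ≤ n`. As `v` has degree `b - 2`, `a(b-1) = pa + qb` with `p ≤ b-2` would give
`b ∣ a(b-1-p)`, hence `b ∣ b-1-p` by coprimality, which is impossible as `0 < b-1-p < b`.
-/

namespace ProjectiveMonomialCurve

/-- The semigroup of the projective monomial curve of `a, b, a+b, a+2b`. -/
abbrev semigroup (a b : ℤ) : AddSubmonoid (ℤ × ℤ) :=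
  AddSubmonoid.closure {(0, a + 2 * b), (a, 2 * b), (b, a + b), (a + b, b), (a + 2 * b, 0)}

def bounded (a b : ℤ) : AddSubmonoid (ℤ × ℤ) where
  carrier := {x | ∃ p q n : ℕ, p ≤ n ∧ x.1 = p * a + q * b ∧ x.1 + x.2 = n * (a + 2 * b)}
  zero_mem' := ⟨0, 0, 0, le_rfl, by simp, by simp⟩
  add_mem' := by
    rintro x y ⟨p, q, n, hpn, hx₁, hx⟩ ⟨p', q', n', hpn', hy₁, hy⟩
    refine ⟨p + p', q + q', n + n', by omega, ?_, ?_⟩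
    · simp only [Prod.fst_add, hx₁, hy₁]; push_cast; ring
    · simp only [Prod.fst_add, Prod.snd_add]; push_cast; linear_combination hx + hy

theorem semigroup_le_bounded (a b : ℤ) : semigroup a b ≤ bounded a b := by
  rw [AddSubmonoid.closure_le]
  simp only [Set.insert_subset_iff, Set.singleton_subset_iff, SetLike.mem_coe]
  refine ⟨⟨0, 0, 1, ?_⟩, ⟨1, 0, 1, ?_⟩, ⟨0, 1, 1, ?_⟩, ⟨1, 1, 1, ?_⟩, ⟨1, 2, 1, ?_⟩⟩ <;>
    refine ⟨by norm_num, ?_, ?_⟩ <;> push_cast <;> ring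

theorem notMem_bounded {a b : ℤ} (hcop : IsCoprime a b) (hdeg : a + 2 * b ≠ 0) :
    (a * (b - 1), 2 * b ^ 2 - a - 4 * b) ∉ bounded a b := by
  rintro ⟨p, q, n, hpn, hx₁, hx⟩
  have hn : (n : ℤ) = b - 2 :=
    mul_right_cancel₀ hdeg (by linear_combination -hx)
  have hdvd : b ∣ a * (b - 1 - p) := ⟨q, by linear_combination hx₁⟩
  have hle : b ≤ b - 1 - p := Int.le_of_dvd (by omega) (hcop.symm.dvd_of_dvd_mul_left hdvd)
  omega

theorem zsmul_mem_of_nonneg {G : Type*} [AddGroup G] {M : AddSubmonoid G} {x : G}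
    (hx : x ∈ M) {k : ℤ} (hk : 0 ≤ k) : k • x ∈ M := by
  lift k to ℕ using hk
  simpa using M.nsmul_mem hx k

end ProjectiveMonomialCurve

open ProjectiveMonomialCurve in
theorem stmt_7_general (a b : ℤ) (ha : 0 < a) (hcop : IsCoprime a b)
    (hb : a + 3 ≤ b) :
    let S := AddSubmonoid.closure
      ({(0, a + 2 * b), (a, 2 * b), (b, a + b), (a + b, b), (a + 2 * b, 0)} : Set (ℤ × ℤ))
    let v : ℤ × ℤ := (a * (b - 1), 2 * b ^ 2 - a - 4 * b)
    v + (0, a + 2 * b) ∈ S ∧ v + (a + 2 * b, 0) ∈ S ∧ v ∉ S := by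
  intro S v
  have gen : ∀ g ∈ ({(0, a + 2 * b), (a, 2 * b), (b, a + b), (a + b, b), (a + 2 * b, 0)} :
      Set (ℤ × ℤ)), g ∈ S := fun g hg => AddSubmonoid.subset_closure hg
  refine ⟨?_, ?_, fun hv => notMem_bounded hcop (by omega) (semigroup_le_bounded a b hv)⟩
  · have h : v + (0, a + 2 * b) = (b - 1) • (a, 2 * b) := by
      ext <;> simp only [v, Prod.mk_add_mk, Prod.smul_mk, Int.zsmul_eq_mul] <;> ring
    rw [h]
    exact zsmul_mem_of_nonneg (gen _ (by simp)) (by omega)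
  · have h : v + (a + 2 * b, 0) = (b - a - 3) • (0, a + 2 * b) + (a + 2) • (b, a + b) := by
      ext <;> simp only [v, Prod.mk_add_mk, Prod.smul_mk, Int.zsmul_eq_mul] <;> ring
    rw [h]
    exact S.add_mem (zsmul_mem_of_nonneg (gen _ (by simp)) (by omega))
      (zsmul_mem_of_nonneg (gen _ (by simp)) (by omega))

/-- For coprime `0 < a < b` with `b ≥ a + 3`, the vector
`v = (a(b-1), 2b² - a - 4b)` satisfies `v + (0, a+2b) ∈ S` and
`v + (a+2b, 0) ∈ S` but `v ∉ S`, where `S` is the affine semigroup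
generated by `(0,a+2b), (a,2b), (b,a+b), (a+b,b), (a+2b,0)`. -/
theorem stmt_7 (a b : ℤ) (ha : 0 < a) (hab : a < b) (hcop : IsCoprime a b)
    (hb : a + 3 ≤ b) :
    let S := AddSubmonoid.closure
      ({(0, a + 2 * b), (a, 2 * b), (b, a + b), (a + b, b), (a + 2 * b, 0)} : Set (ℤ × ℤ))
    let v : ℤ × ℤ := (a * (b - 1), 2 * b ^ 2 - a - 4 * b)
    v + (0, a + 2 * b) ∈ S ∧ v + (a + 2 * b, 0) ∈ S ∧ v ∉ S :=
  stmt_7_general a b ha hcop hb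
end

section
/- Let a < b be positive integers with gcd(a,b) = 1, b ≥ a + 2. Consider the affine semigroup S = ⟨(0, 2a+b), (a, a+b), (b, 2a), (a+b, a), (2a+b, 0)⟩ ⊆ ℕ². Then the vector v = (a(b-1), b² - 2b + ab - 3a) satisfies: v + (0, 2a+b) ∈ S, v + (2a+b, 0) ∈ S, but v ∉ S. -/
/-!
The two memberships are explicit decompositions into generators. For `v ∉ S`: every generator,
hence every element `(x, y)` of `S`, can be written with naturals `i, j, k` as
`x = a i + b j`, `x + y = k (2a+b)`, `i ≤ j + k`. For `v` the degree is forced to be `k = b - 2`,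
and `a(b-1) = a i + b j` with `gcd(a, b) = 1` and `b j < a b` forces `j = 0`, so `i = b - 1 > j + k`.
-/

theorem AddSubmonoid.zsmul_mem_of_nonneg {M : Type*} [AddGroup M] (S : AddSubmonoid M) {x : M}
    (hx : x ∈ S) {n : ℤ} (hn : 0 ≤ n) : n • x ∈ S := by
  lift n to ℕ using hn
  rw [natCast_zsmul]
  exact nsmul_mem hx n

def countingMonoid (a b : ℤ) : AddSubmonoid (ℤ × ℤ) where
  carrier := {p | ∃ i j k : ℕ, p.1 = a * i + b * j ∧ p.1 + p.2 = (2 * a + b) * k ∧ i ≤ j + k}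
  zero_mem' := ⟨0, 0, 0, by simp⟩
  add_mem' := by
    rintro p q ⟨i, j, k, hp₁, hp, hijk⟩ ⟨i', j', k', hq₁, hq, hijk'⟩
    refine ⟨i + i', j + j', k + k', ?_, ?_, by omega⟩
    · simp only [Prod.fst_add, hp₁, hq₁]; push_cast; ring
    · simp only [Prod.fst_add, Prod.snd_add]; push_cast; linear_combination hp + hq

theorem closure_le_countingMonoid (a b : ℤ) :
    AddSubmonoid.closure
      ({(0, 2 * a + b), (a, a + b), (b, 2 * a), (a + b, a), (2 * a + b, 0)} : Set (ℤ × ℤ)) ≤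
      countingMonoid a b := by
  rw [AddSubmonoid.closure_le]
  rintro p (rfl | rfl | rfl | rfl | rfl)
  · exact ⟨0, 0, 1, by simp, by simp, by simp⟩
  · exact ⟨1, 0, 1, by simp, by simp; ring, le_rfl⟩
  · exact ⟨0, 1, 1, by simp, by simp; ring, by simp⟩
  · exact ⟨1, 1, 1, by simp, by simp; ring, by simp⟩
  · exact ⟨2, 1, 1, by simp; ring, by simp, le_rfl⟩

theorem notMem_countingMonoid {a b : ℤ} (ha : 0 < a) (hb : 0 < b) (hcop : IsCoprime a b) :
    (a * (b - 1), b ^ 2 - 2 * b + a * b - 3 * a) ∉ countingMonoid a b := by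
  rintro ⟨i, j, k, hx, hdeg, hijk⟩
  simp only at hx hdeg
  have hk : (k : ℤ) = b - 2 := by
    refine mul_left_cancel₀ (by positivity : 2 * a + b ≠ 0) ?_
    linear_combination -hdeg
  have hj : (j : ℤ) = 0 := by
    obtain ⟨m, hm⟩ : a ∣ j := hcop.dvd_of_dvd_mul_left ⟨b - 1 - i, by linear_combination -hx⟩
    have hm₀ : 0 ≤ m := by nlinarith [Int.natCast_nonneg j]
    have hm₁ : m < 1 := by
      by_contra! h
      nlinarith [Int.natCast_nonneg i, mul_nonneg (sub_nonneg.2 h) (mul_pos ha hb).le]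
    rw [hm, show m = 0 by omega, mul_zero]
  have hi : (i : ℤ) = b - 1 := by
    refine mul_left_cancel₀ ha.ne' ?_
    linear_combination -hx - b * hj
  omega

theorem stmt_8_general (a b : ℤ) (ha : 0 < a) (hcop : IsCoprime a b)
    (hb : a + 2 ≤ b) :
    let S := AddSubmonoid.closure
      ({(0, 2 * a + b), (a, a + b), (b, 2 * a), (a + b, a), (2 * a + b, 0)} : Set (ℤ × ℤ))
    let v : ℤ × ℤ := (a * (b - 1), b ^ 2 - 2 * b + a * b - 3 * a)
    v + (0, 2 * a + b) ∈ S ∧ v + (2 * a + b, 0) ∈ S ∧ v ∉ S := by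
  intro S v
  have gen {g : ℤ × ℤ} (hg : g ∈ ({(0, 2 * a + b), (a, a + b), (b, 2 * a), (a + b, a),
      (2 * a + b, 0)} : Set (ℤ × ℤ))) : g ∈ S := AddSubmonoid.subset_closure hg
  refine ⟨?_, ?_, fun hv => notMem_countingMonoid ha (by omega) hcop
    (closure_le_countingMonoid a b hv)⟩
  · have hv : v + (0, 2 * a + b) = (b - 1) • (a, a + b) := by ext <;> simp [v] <;> ring
    rw [hv]
    exact S.zsmul_mem_of_nonneg (gen (by simp)) (by omega)
  · have hv : v + (2 * a + b, 0) = (b - a - 2) • (0, 2 * a + b) + a • (b, 2 * a) + (a + b, a) := by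
      ext <;> simp [v] <;> ring
    rw [hv]
    exact add_mem (add_mem (S.zsmul_mem_of_nonneg (gen (by simp)) (by omega))
      (S.zsmul_mem_of_nonneg (gen (by simp)) ha.le)) (gen (by simp))

/-- For coprime `0 < a < b` with `b ≥ a + 2`, the vector
`v = (a(b-1), b² - 2b + ab - 3a)` satisfies `v + (0, 2a+b) ∈ S` and
`v + (2a+b, 0) ∈ S` but `v ∉ S`, where `S` is the affine semigroup
generated by `(0,2a+b), (a,a+b), (b,2a), (a+b,a), (2a+b,0)`. -/
theorem stmt_8 (a b : ℤ) (ha : 0 < a) (hab : a < b) (hcop : IsCoprime a b)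
    (hb : a + 2 ≤ b) :
    let S := AddSubmonoid.closure
      ({(0, 2 * a + b), (a, a + b), (b, 2 * a), (a + b, a), (2 * a + b, 0)} : Set (ℤ × ℤ))
    let v : ℤ × ℤ := (a * (b - 1), b ^ 2 - 2 * b + a * b - 3 * a)
    v + (0, 2 * a + b) ∈ S ∧ v + (2 * a + b, 0) ∈ S ∧ v ∉ S :=
  stmt_8_general a b ha hcop hb
end

section
/- Let a < b be positive integers with gcd(a,b) = 1 and b ≠ 2. Consider the affine semigroup S = ⟨(0, 2b), (a, 2b-a), (b, b), (a+b, b-a), (2b, 0)⟩ ⊆ ℕ². Then the vector v = (2a, 2b - 2a) satisfies: v + (0, 2b) ∈ S, v + (2b, 0) ∈ S, but v ∉ S. -/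
/-!
All five generators lie on the line `x + y = 2b`, so the coordinate sum grades `S`: an element
that is a sum of `n` generators has coordinate sum `2bn`. The vector `v` also has coordinate
sum `2b`, hence would have to be one of the generators, and comparing coordinates rules this out
(the case `v = (b, b)` forces `b = 2a`, so `a ∣ b`, `a = 1` and `b = 2`).
-/

theorem AddSubmonoid.mem_of_mem_closure_of_map_eq {M : Type*} [AddMonoid M] {s : Set M}
    (f : M →+ ℤ) {d : ℤ} (hd : d ≠ 0) (hs : ∀ y ∈ s, f y = d) {x : M}
    (hx : x ∈ AddSubmonoid.closure s) (hfx : f x = d) : x ∈ s := by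
  obtain ⟨l, hls, rfl⟩ := AddSubmonoid.exists_list_of_mem_closure hx
  have hdeg : f l.sum = l.length • d := by
    rw [map_list_sum, List.map_congr_left (fun y hy => hs y (hls y hy)), List.map_const',
      List.sum_replicate]
  have hlen : l.length = 1 := by
    rw [hfx, nsmul_eq_mul] at hdeg
    exact_mod_cast (mul_eq_right₀ hd).mp hdeg.symm
  obtain ⟨y, rfl⟩ := List.length_eq_one_iff.mp hlen
  simpa using hls y (by simp)

theorem Int.eq_one_of_isCoprime_two_mul {a : ℤ} (ha : 0 < a) (h : IsCoprime a (2 * a)) :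
    a = 1 := by
  have := h.isUnit_of_dvd' dvd_rfl (dvd_mul_left a 2)
  rcases Int.isUnit_iff.mp this with h1 | h1 <;> omega

/-- For coprime `0 < a < b` with `b ≠ 2`, the vector `v = (2a, 2b - 2a)`
satisfies `v + (0, 2b) ∈ S` and `v + (2b, 0) ∈ S` but `v ∉ S`, where `S` is
the affine semigroup generated by `(0,2b), (a,2b-a), (b,b), (a+b,b-a), (2b,0)`. -/
theorem stmt_9 (a b : ℤ) (ha : 0 < a) (hab : a < b) (hcop : IsCoprime a b)
    (hb2 : b ≠ 2) :
    let S := AddSubmonoid.closure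
      ({(0, 2 * b), (a, 2 * b - a), (b, b), (a + b, b - a), (2 * b, 0)} : Set (ℤ × ℤ))
    let v : ℤ × ℤ := (2 * a, 2 * b - 2 * a)
    v + (0, 2 * b) ∈ S ∧ v + (2 * b, 0) ∈ S ∧ v ∉ S := by
  intro S v
  have hgen : ∀ {x : ℤ × ℤ}, x ∈ ({(0, 2 * b), (a, 2 * b - a), (b, b), (a + b, b - a),
      (2 * b, 0)} : Set (ℤ × ℤ)) → x ∈ S := fun hx => AddSubmonoid.subset_closure hx
  refine ⟨?_, ?_, fun hv => ?_⟩
  · have hsum : v + (0, 2 * b) = (a, 2 * b - a) + (a, 2 * b - a) := by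
      ext <;> simp only [v, Prod.fst_add, Prod.snd_add] <;> ring
    exact hsum ▸ add_mem (hgen (by simp)) (hgen (by simp))
  · have hsum : v + (2 * b, 0) = (a + b, b - a) + (a + b, b - a) := by
      ext <;> simp only [v, Prod.fst_add, Prod.snd_add] <;> ring
    exact hsum ▸ add_mem (hgen (by simp)) (hgen (by simp))
  · have hgen_v := AddSubmonoid.mem_of_mem_closure_of_map_eq
      (AddMonoidHom.fst ℤ ℤ + AddMonoidHom.snd ℤ ℤ) (d := 2 * b) (by omega)
      (by
        simp only [Set.mem_insert_iff, Set.mem_singleton_iff]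
        rintro _ (rfl | rfl | rfl | rfl | rfl) <;>
          simp only [AddMonoidHom.add_apply, AddMonoidHom.coe_fst, AddMonoidHom.coe_snd] <;> ring)
      hv (by
        simp only [v, AddMonoidHom.add_apply, AddMonoidHom.coe_fst, AddMonoidHom.coe_snd]
        ring)
    simp only [v, Set.mem_insert_iff, Set.mem_singleton_iff, Prod.ext_iff] at hgen_v
    rcases hgen_v with ⟨h1, -⟩ | ⟨h1, -⟩ | ⟨h1, -⟩ | ⟨h1, -⟩ | ⟨h1, -⟩
    · omega
    · omega
    · have := Int.eq_one_of_isCoprime_two_mul ha (h1 ▸ hcop)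
      omega
    · omega
    · omega
end

section
/- Let k ≥ 2 and let S be the submonoid of ℕ² generated by f₁=(0,2k+1), f₂=(k,k+1), f₃=(k+1,k), f₄=(2k+1,0). Set v₁ = (-(k²-k-1), -(k²-2k-1)) and v₂ = (-(k²-2k-1), -(k²-k-1)) in ℤ². Then for each generator fᵢ there exists w ∈ ℤ² such that both w + v₁ ∈ S and w + v₂ ∈ S, and moreover fᵢ ∈ {w + v₁, w + v₂}. -/
/-- Nearly Gorenstein covering for `S = ⟨(0,2k+1), (k,k+1), (k+1,k), (2k+1,0)⟩`, `k ≥ 2`: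
with `v₁ = (-(k²-k-1), -(k²-2k-1))` and `v₂ = (-(k²-2k-1), -(k²-k-1))`, every generator
`f` of `S` can be written as `w + v₁` or `w + v₂` for some `w ∈ ℤ²` with both
`w + v₁ ∈ S` and `w + v₂ ∈ S`. -/
theorem stmt_15 (k : ℤ) (hk : 2 ≤ k) :
    let S := AddSubmonoid.closure
      ({(0, 2 * k + 1), (k, k + 1), (k + 1, k), (2 * k + 1, 0)} : Set (ℤ × ℤ))
    let v₁ : ℤ × ℤ := (-(k ^ 2 - k - 1), -(k ^ 2 - 2 * k - 1))
    let v₂ : ℤ × ℤ := (-(k ^ 2 - 2 * k - 1), -(k ^ 2 - k - 1))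
    ∀ f ∈ ({(0, 2 * k + 1), (k, k + 1), (k + 1, k), (2 * k + 1, 0)} : Set (ℤ × ℤ)),
      ∃ w : ℤ × ℤ, w + v₁ ∈ S ∧ w + v₂ ∈ S ∧ (f = w + v₁ ∨ f = w + v₂) := by
  intro S v₁ v₂ f hf
  have h1 : ((0 : ℤ), 2 * k + 1) ∈ S := AddSubmonoid.subset_closure (by simp)
  have h2 : ((k : ℤ), k + 1) ∈ S := AddSubmonoid.subset_closure (by simp)
  have h3 : ((k + 1 : ℤ), k) ∈ S := AddSubmonoid.subset_closure (by simp)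
  have h4 : ((2 * k + 1 : ℤ), 0) ∈ S := AddSubmonoid.subset_closure (by simp)
  rcases hf with rfl | rfl | rfl | rfl
  · refine ⟨((0, 2 * k + 1) : ℤ × ℤ) - v₁, by simpa using h1, ?_, Or.inl (by simp)⟩
    have : ((0, 2 * k + 1) : ℤ × ℤ) - v₁ + v₂ = ((k : ℤ), k + 1) := by
      simp only [v₁, v₂, Prod.ext_iff, Prod.fst_sub, Prod.snd_sub, Prod.fst_add, Prod.snd_add]
      constructor <;> ring
    rw [this]; exact h2
  · refine ⟨((k, k + 1) : ℤ × ℤ) - v₂, ?_, by simpa using h2, Or.inr (by simp)⟩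
    have : ((k, k + 1) : ℤ × ℤ) - v₂ + v₁ = ((0 : ℤ), 2 * k + 1) := by
      simp only [v₁, v₂, Prod.ext_iff, Prod.fst_sub, Prod.snd_sub, Prod.fst_add, Prod.snd_add]
      constructor <;> ring
    rw [this]; exact h1
  · refine ⟨((k + 1, k) : ℤ × ℤ) - v₁, by simpa using h3, ?_, Or.inl (by simp)⟩
    have : ((k + 1, k) : ℤ × ℤ) - v₁ + v₂ = ((2 * k + 1 : ℤ), 0) := by
      simp only [v₁, v₂, Prod.ext_iff, Prod.fst_sub, Prod.snd_sub, Prod.fst_add, Prod.snd_add]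
      constructor <;> ring
    rw [this]; exact h4
  · refine ⟨((2 * k + 1, 0) : ℤ × ℤ) - v₂, ?_, by simpa using h4, Or.inr (by simp)⟩
    have : ((2 * k + 1, 0) : ℤ × ℤ) - v₂ + v₁ = ((k + 1 : ℤ), k) := by
      simp only [v₁, v₂, Prod.ext_iff, Prod.fst_sub, Prod.snd_sub, Prod.fst_add, Prod.snd_add]
      constructor <;> ring
    rw [this]; exact h3
end
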